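/- If k ≥ 3 and m = A_a(k,b)+l is in k-normal form, then m[k←k+1] = A_{a'}(k+1, b') + l is in (k+1)-normal form, where a' = a[k←k+1] and b' = b[k←k+1]; that is, a' is maximal with A_{a'}(k+1,0) ≤ m[k←k+1] and b' is maximal with A_{a'}(k+1,b') ≤ m[k←k+1]. -/
import Mathlib


/-- The parametrized Ackermann function: `A a k b` is `A_a(k,b)`. -/
def A : ℕ → ℕ → ℕ → ℕ
  | 0, _, b => b + 1
  | a+1, k, 0 => (fun x => A a k x)^[k] 0
  | a+1, k, b+1 => (fun x => A a k x)^[k] (A (a+1) k b)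
  termination_by a _ b => (a, b)

/-- `m = A_a(k,b) + l` is the `k`-normal form of `m`: `a` is maximal with
`A_a(k,0) ≤ m` and `b` is maximal with `A_a(k,b) ≤ m`. -/
def IsNF (k m a b l : ℕ) : Prop :=
  m = A a k b + l ∧ A a k 0 ≤ m ∧
  (∀ a', A a' k 0 ≤ m → a' ≤ a) ∧
  (∀ b', A a k b' ≤ m → b' ≤ b)

/-- The graph of the hereditary base change operation `m ↦ m[k←k+1]`. -/
inductive BC (k : ℕ) : ℕ → ℕ → Prop
  | zero : BC k 0 0
  | step {a b l a' b'} :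
      IsNF k (A a k b + l) a b l → BC k a a' → BC k b b' →
      BC k (A a k b + l) (A a' (k+1) b' + l)

/- ### Auxiliary lemmas -/

lemma A_zero' (k b : ℕ) : A 0 k b = b + 1 := by simp [A]
lemma A_succ_zero (a k : ℕ) : A (a+1) k 0 = (A a k)^[k] 0 := by rw [A]
lemma A_succ_succ (a k b : ℕ) : A (a+1) k (b+1) = (A a k)^[k] (A (a+1) k b) := by rw [A]

lemma iter_add {g : ℕ → ℕ} (hg : ∀ x, x < g x) (n x : ℕ) : x + n ≤ g^[n] x := by
  induction n with
  | zero => simp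
  | succ n ih =>
    rw [Function.iterate_succ_apply']
    have := hg (g^[n] x); omega

lemma iter_count_le {g : ℕ → ℕ} (hg : ∀ x, x < g x) {m n : ℕ} (h : m ≤ n) (x : ℕ) :
    g^[m] x ≤ g^[n] x := by
  have h1 : g^[n] x = g^[n - m] (g^[m] x) := by
    rw [← Function.iterate_add_apply]; congr 1; omega
  have := iter_add hg (n - m) (g^[m] x)
  omega

lemma iter_lt_count {g : ℕ → ℕ} (hg : ∀ x, x < g x) {m n : ℕ} (h : m < n) (x : ℕ) :
    g^[m] x < g^[n] x := by
  have h1 : g^[m] x < g^[m+1] x := by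
    rw [Function.iterate_succ_apply']; exact hg _
  exact lt_of_lt_of_le h1 (iter_count_le hg h x)

lemma iter_peel {g : ℕ → ℕ} {m : ℕ} (hm : 1 ≤ m) (x : ℕ) : g^[m] x = g (g^[m-1] x) := by
  conv_lhs => rw [show m = (m-1)+1 by omega]
  rw [Function.iterate_succ_apply']

lemma iter_peel' {g : ℕ → ℕ} {m : ℕ} (hm : 1 ≤ m) (x : ℕ) : g^[m] x = g^[m-1] (g x) := by
  conv_lhs => rw [show m = (m-1)+1 by omega]
  rw [Function.iterate_succ_apply]

lemma iter_mono2 {f g : ℕ → ℕ} (hfg : ∀ x, f x ≤ g x) (hgm : Monotone g) :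
    ∀ (n : ℕ) {x y : ℕ}, x ≤ y → f^[n] x ≤ g^[n] y := by
  intro n
  induction n with
  | zero => intro x y h; simpa using h
  | succ n ih =>
    intro x y h
    rw [Function.iterate_succ_apply', Function.iterate_succ_apply']
    exact le_trans (hfg _) (hgm (ih h))

lemma iter_full {f g : ℕ → ℕ} (hfg : ∀ x, f x ≤ g x) (hgm : Monotone g)
    (hg : ∀ x, x < g x) {m n x y : ℕ} (hmn : m ≤ n) (hxy : x ≤ y) :
    f^[m] x ≤ g^[n] y :=
  le_trans (iter_mono2 hfg hgm m hxy) (iter_count_le hg hmn y)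

lemma strictMono_iter {F : ℕ → ℕ} (hF : StrictMono F) (n : ℕ) : StrictMono (F^[n]) := by
  induction n with
  | zero => simpa using strictMono_id
  | succ n ih => rw [Function.iterate_succ]; exact ih.comp hF

lemma strictMono_gap {F : ℕ → ℕ} (hF : StrictMono F) {z w : ℕ} (h : z ≤ w) :
    F z + w ≤ F w + z := by
  induction w, h using Nat.le_induction with
  | base => omega
  | succ w hw ih =>
    have h2 : F w < F (w + 1) := hF (by omega)
    omega

section Basic
variable {k : ℕ}

lemma lt_A (hk : 1 ≤ k) : ∀ a b, b < A a k b := by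
  intro a
  induction a with
  | zero => intro b; simp [A_zero']
  | succ a ih =>
    intro b
    induction b with
    | zero =>
      rw [A_succ_zero]
      have := iter_add ih k 0; omega
    | succ b ihb =>
      rw [A_succ_succ]
      have := iter_add ih k (A (a+1) k b); omega

lemma A_pos (hk : 1 ≤ k) (a b : ℕ) : 0 < A a k b :=
  Nat.lt_of_le_of_lt (Nat.zero_le b) (lt_A hk a b)

lemma A_lt_succ_b (hk : 1 ≤ k) (a b : ℕ) : A a k b < A a k (b+1) := by
  cases a with
  | zero => simp [A_zero']
  | succ a =>
    rw [A_succ_succ]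
    have := iter_add (lt_A hk a) k (A (a+1) k b); omega

lemma A_strictMono_b (hk : 1 ≤ k) (a : ℕ) : StrictMono (A a k) :=
  strictMono_nat_of_lt_succ (A_lt_succ_b hk a)

lemma A_mono_b (hk : 1 ≤ k) (a : ℕ) {b b2 : ℕ} (h : b ≤ b2) : A a k b ≤ A a k b2 :=
  (A_strictMono_b hk a).monotone h

lemma A_le_succ_a (hk : 1 ≤ k) (a : ℕ) : ∀ b, A a k b ≤ A (a+1) k b := by
  intro b
  induction b with
  | zero =>
    rw [A_succ_zero]
    have h1 : (A a k)^[1] 0 ≤ (A a k)^[k] 0 := iter_count_le (lt_A hk a) hk 0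
    simpa using h1
  | succ b ih =>
    rw [A_succ_succ]
    have h1 : b + 1 ≤ A (a+1) k b := lt_A hk (a+1) b
    have h2 : A a k (b+1) ≤ A a k (A (a+1) k b) := A_mono_b hk a h1
    have h3 : (A a k)^[1] (A (a+1) k b) ≤ (A a k)^[k] (A (a+1) k b) :=
      iter_count_le (lt_A hk a) hk _
    simp only [Function.iterate_one] at h3
    omega

lemma A_mono_a (hk : 1 ≤ k) {a a2 : ℕ} (h : a ≤ a2) (b : ℕ) : A a k b ≤ A a2 k b :=
  monotone_nat_of_le_succ (fun a => A_le_succ_a hk a b) h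

lemma A_mono_k (hk : 1 ≤ k) {k2 : ℕ} (hkk : k ≤ k2) : ∀ a b, A a k b ≤ A a k2 b := by
  have hk2 : 1 ≤ k2 := le_trans hk hkk
  intro a
  induction a with
  | zero => simp [A_zero']
  | succ a ih =>
    intro b
    induction b with
    | zero =>
      rw [A_succ_zero, A_succ_zero]
      exact iter_full ih (A_strictMono_b hk2 a).monotone (lt_A hk2 a) hkk le_rfl
    | succ b ihb =>
      rw [A_succ_succ, A_succ_succ]
      exact iter_full ih (A_strictMono_b hk2 a).monotone (lt_A hk2 a) hkk ihb

lemma lt_A_zero (hk : 2 ≤ k) : ∀ a, a < A a k 0 := by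
  have hk1 : 1 ≤ k := by omega
  intro a
  induction a with
  | zero => simp [A_zero']
  | succ a ih =>
    rw [A_succ_zero]
    have e1 : (A a k)^[k] 0 = (A a k)^[k-1] (A a k 0) := iter_peel' hk1 0
    have e2 := iter_add (lt_A hk1 a) (k-1) (A a k 0)
    omega

lemma gap_lemma (hk : 1 ≤ k) {k2 a a2 b b2 : ℕ} (hkk : k ≤ k2) (haa : a ≤ a2) (hbb : b ≤ b2) :
    A a k (b+1) + A a2 k2 b2 ≤ A a k b + A a2 k2 (b2+1) := by
  have hk2 : 1 ≤ k2 := le_trans hk hkk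
  cases a with
  | zero =>
    have := A_lt_succ_b hk2 a2 b2
    simp only [A_zero']
    omega
  | succ c =>
    obtain ⟨c2, rfl⟩ : ∃ c2, a2 = c2 + 1 := ⟨a2 - 1, by omega⟩
    have hcc : c ≤ c2 := by omega
    rw [A_succ_succ, A_succ_succ]
    have hyz : A (c+1) k b ≤ A (c2+1) k2 b2 :=
      le_trans (A_mono_a hk haa b) (le_trans (A_mono_k hk hkk (c2+1) b) (A_mono_b hk2 (c2+1) hbb))
    have h1 : (A c k)^[k] (A (c+1) k b) + A (c2+1) k2 b2 ≤
        (A c k)^[k] (A (c2+1) k2 b2) + A (c+1) k b :=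
      strictMono_gap (strictMono_iter (A_strictMono_b hk c) k) hyz
    have h2 : (A c k)^[k] (A (c2+1) k2 b2) ≤ (A c2 k2)^[k2] (A (c2+1) k2 b2) :=
      iter_full (fun x => le_trans (A_mono_a hk hcc x) (A_mono_k hk hkk c2 x))
        (A_strictMono_b hk2 c2).monotone (lt_A hk2 c2) hkk le_rfl
    omega

lemma IsNF_unique {m a b l a2 b2 l2 : ℕ} (h1 : IsNF k m a b l) (h2 : IsNF k m a2 b2 l2) :
    a = a2 ∧ b = b2 ∧ l = l2 := by
  obtain ⟨e1, le1, amax1, bmax1⟩ := h1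
  obtain ⟨e2, le2, amax2, bmax2⟩ := h2
  have haa : a = a2 := le_antisymm (amax2 a le1) (amax1 a2 le2)
  subst haa
  have hbb : b = b2 := le_antisymm (bmax2 b (by omega)) (bmax1 b2 (by omega))
  subst hbb
  omega

lemma BC_zero (hk : 1 ≤ k) {n n' : ℕ} (h : BC k n n') (hn : n = 0) : n' = 0 := by
  cases h with
  | zero => rfl
  | step hnf ha hb =>
    rename_i a b l a' b'
    have := A_pos hk a b
    omega

lemma BC_cases {k n n2 : ℕ} (h2 : BC k n n2) :
    (n = 0 ∧ n2 = 0) ∨ ∃ a b l a' b', n = A a k b + l ∧ n2 = A a' (k+1) b' + l ∧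
      IsNF k n a b l ∧ BC k a a' ∧ BC k b b' := by
  cases h2 with
  | zero => exact Or.inl ⟨rfl, rfl⟩
  | step hnf ha hb => exact Or.inr ⟨_, _, _, _, _, rfl, rfl, hnf, ha, hb⟩

lemma BC_le (hk : 1 ≤ k) {n n' : ℕ} (h : BC k n n') : n ≤ n' := by
  induction h with
  | zero => exact le_rfl
  | step hnf ha hb iha ihb =>
    rename_i a b l a' b'
    have h1 : A a k b ≤ A a' (k+1) b' :=
      le_trans (A_mono_a hk iha b)
        (le_trans (A_mono_k hk (Nat.le_succ k) a' b) (A_mono_b (by omega) a' ihb))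
    omega

lemma BC_func (hk : 1 ≤ k) {n n1 : ℕ} (h1 : BC k n n1) :
    ∀ {n2 : ℕ}, BC k n n2 → n1 = n2 := by
  induction h1 with
  | zero =>
    intro n2 h2
    exact (BC_zero hk h2 rfl).symm
  | step hnf ha hb iha ihb =>
    rename_i a b l a' b'
    intro n2 h2
    rcases BC_cases h2 with ⟨h0, h0'⟩ | ⟨a2, b2, l2, a2', b2', he, he2, hnf2, ha2, hb2⟩
    · have := A_pos hk a b
      omega
    · obtain ⟨ea, eb, el⟩ := IsNF_unique hnf hnf2
      subst ea; subst eb; subst el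
      rw [he2, iha ha2, ihb hb2]

lemma BC_iter (hk : 1 ≤ k) {a a' : ℕ} (ha : BC k a a') :
    ∀ j, j < k → BC k ((A a k)^[j] 0) ((A a' (k+1))^[j] 0) := by
  intro j
  induction j with
  | zero => intro _; simpa using BC.zero
  | succ j ih =>
    intro hj
    have hbc := ih (by omega)
    have hnf : IsNF k (A a k ((A a k)^[j] 0) + 0) a ((A a k)^[j] 0) 0 := by
      refine ⟨rfl, ?_, ?_, ?_⟩
      · have h1 : A a k 0 ≤ A a k ((A a k)^[j] 0) := A_mono_b hk a (Nat.zero_le _)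
        omega
      · intro a2 h2
        by_contra hlt
        push_neg at hlt
        have h3 : A (a+1) k 0 ≤ A a2 k 0 := A_mono_a hk hlt 0
        have h4 : A a k ((A a k)^[j] 0) < A (a+1) k 0 := by
          rw [A_succ_zero]
          have : (A a k)^[j+1] 0 < (A a k)^[k] 0 := iter_lt_count (lt_A hk a) hj 0
          rwa [Function.iterate_succ_apply'] at this
        omega
      · intro b2 h2
        have h2' : A a k b2 ≤ A a k ((A a k)^[j] 0) := by omega
        exact (A_strictMono_b hk a).le_iff_le.mp h2'
    have hstep := BC.step hnf ha hbc
    have e1 : A a k ((A a k)^[j] 0) + 0 = (A a k)^[j+1] 0 := by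
      rw [Function.iterate_succ_apply']; omega
    have e2 : A a' (k+1) ((A a' (k+1))^[j] 0) + 0 = (A a' (k+1))^[j+1] 0 := by
      rw [Function.iterate_succ_apply']; omega
    rwa [e1, e2] at hstep

end Basic

theorem main_ind (k : ℕ) (hk : 3 ≤ k) : ∀ n : ℕ,
    (∀ x x' n', x < n → BC k x x' → BC k n n' → x' < n') ∧
    (∀ a b l a' b', IsNF k n a b l → BC k a a' → BC k b b' →
      IsNF (k+1) (A a' (k+1) b' + l) a' b' l) := by
  have hk1 : 1 ≤ k := by omega
  have hk2 : 2 ≤ k := by omega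
  have hk1' : 1 ≤ k + 1 := by omega
  have hk2' : 2 ≤ k + 1 := by omega
  intro n
  induction n using Nat.strong_induction_on with
  | _ n IH =>
  have Mn : ∀ x x' n', x < n → BC k x x' → BC k n n' → x' < n' := by
    intro x x' n' hxn hx hn
    cases hn with
    | zero => omega
    | step hnfy hbe hbf =>
      rename_i e f j e' f'
      cases hx with
      | zero =>
        have := A_pos hk1' e' f'
        omega
      | step hnfx hbc hbd =>
        rename_i c d l c' d'
        obtain ⟨-, hley, amaxy, bmaxy⟩ := hnfy
        have Tx := (IH _ hxn).2 c d l c' d' hnfx hbc hbd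
        have hcle : c ≤ e := by
          apply amaxy
          exact le_trans hnfx.2.1 (le_of_lt hxn)
        rcases lt_or_eq_of_le hcle with hclt | hceq
        · -- c < e
          have he_lt_n : e < A e k f + j := by
            have h1 : e < A e k 0 := lt_A_zero hk2 e
            have h2 : A e k 0 ≤ A e k f := A_mono_b hk1 e (Nat.zero_le f)
            omega
          have hce' : c' < e' := (IH e he_lt_n).1 c c' e' hclt hbc hbe
          have hx'lt : A c' (k+1) d' + l < A (c'+1) (k+1) 0 := by
            by_contra h
            push_neg at h
            have := Tx.2.2.1 (c'+1) h
            omega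
          have h5 : A (c'+1) (k+1) 0 ≤ A e' (k+1) 0 := A_mono_a hk1' (by omega) 0
          have h6 : A e' (k+1) 0 ≤ A e' (k+1) f' := A_mono_b hk1' e' (Nat.zero_le f')
          omega
        · -- c = e
          subst hceq
          have hc'e' : c' = e' := BC_func hk1 hbc hbe
          subst hc'e'
          have hdf : d ≤ f := by
            apply bmaxy
            have : A c k d ≤ A c k d + l := Nat.le_add_right _ _
            omega
          rcases lt_or_eq_of_le hdf with hdlt | hdeq
          · have hf_lt_n : f < A c k f + j := by
              have := lt_A hk1 c f
              omega
            have hdf' : d' < f' := (IH f hf_lt_n).1 d d' f' hdlt hbd hbf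
            have hx'lt : A c' (k+1) d' + l < A c' (k+1) (d'+1) := by
              by_contra h
              push_neg at h
              have := Tx.2.2.2 (d'+1) h
              omega
            have h5 : A c' (k+1) (d'+1) ≤ A c' (k+1) f' := A_mono_b hk1' c' (by omega)
            omega
          · subst hdeq
            have hd'f' : d' = f' := BC_func hk1 hbd hbf
            subst hd'f'
            omega
  have Myn : ∀ y, y ≤ n → ∀ x x' y', x < y → BC k x x' → BC k y y' → x' < y' := by
    intro y hy
    rcases lt_or_eq_of_le hy with hlt | heq
    · exact (IH y hlt).1
    · subst heq; exact Mn
  refine ⟨Mn, ?_⟩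
  intro a b l a' b' hnf ha hb
  obtain ⟨heqn, hle0, amax, bmax⟩ := hnf
  have P1 : A a k b + l < A (a+1) k 0 := by
    by_contra h
    push_neg at h
    have := amax (a+1) (by omega)
    omega
  have P2 : A a k b + l < A a k (b+1) := by
    by_contra h
    push_neg at h
    have := bmax (b+1) (by omega)
    omega
  have hba : a ≤ a' := BC_le hk1 ha
  have hbb : b ≤ b' := BC_le hk1 hb
  have KI : A a' (k+1) b' + l < A a' (k+1) (b'+1) := by
    have := gap_lemma hk1 (show k ≤ k+1 by omega) hba hbb
    omega
  have hb'1 : b' + 1 ≤ (A a' (k+1))^[k] 0 := by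
    rcases Nat.eq_zero_or_pos b with rfl | hbpos
    · have hb0 : b' = 0 := BC_zero hk1 hb rfl
      subst hb0
      have := iter_add (lt_A hk1' a') k 0
      omega
    · have hGk : A (a+1) k 0 = (A a k)^[k] 0 := A_succ_zero a k
      have hbk : b < (A a k)^[k-1] 0 := by
        have h1 : A a k b < (A a k)^[k] 0 := by rw [← hGk]; omega
        have h2 : (A a k)^[k] 0 = A a k ((A a k)^[k-1] 0) := iter_peel hk1 0
        rw [h2] at h1
        exact (A_strictMono_b hk1 a).lt_iff_lt.mp h1
      have hex : ∃ j, b < (A a k)^[j] 0 := ⟨k-1, hbk⟩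
      have hj : b < (A a k)^[Nat.find hex] 0 := Nat.find_spec hex
      set j := Nat.find hex with hjdef
      have hjk : j ≤ k - 1 := Nat.find_min' hex hbk
      have hj1 : 1 ≤ j := by
        rcases Nat.eq_zero_or_pos j with h0 | h
        · rw [h0] at hj; simp at hj
        · exact h
      have hjprev : (A a k)^[j-1] 0 ≤ b := by
        by_contra h
        push_neg at h
        exact Nat.find_min hex (show j - 1 < j by omega) h
      have hyn : (A a k)^[j] 0 ≤ A a k b + l := by
        have e3 : (A a k)^[j] 0 = A a k ((A a k)^[j-1] 0) := iter_peel hj1 0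
        rw [e3]
        have := A_mono_b hk1 a hjprev
        omega
      have hbcj : BC k ((A a k)^[j] 0) ((A a' (k+1))^[j] 0) :=
        BC_iter hk1 ha j (by omega)
      have hb'lt : b' < (A a' (k+1))^[j] 0 := by
        apply Myn ((A a k)^[j] 0) (by omega) b b' _ hj hb hbcj
      have := iter_count_le (lt_A hk1' a') (show j ≤ k by omega) 0
      omega
  have key2 : A a' (k+1) b' + l < A (a'+1) (k+1) 0 := by
    have h3 : A (a'+1) (k+1) 0 = (A a' (k+1))^[k+1] 0 := A_succ_zero a' (k+1)
    have h4 : (A a' (k+1))^[k+1] 0 = A a' (k+1) ((A a' (k+1))^[k] 0) := by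
      rw [Function.iterate_succ_apply']
    have h5 : A a' (k+1) (b'+1) ≤ A a' (k+1) ((A a' (k+1))^[k] 0) :=
      A_mono_b hk1' a' hb'1
    omega
  refine ⟨rfl, ?_, ?_, ?_⟩
  · have := A_mono_b hk1' a' (Nat.zero_le b')
    omega
  · intro a2 h2
    by_contra hgt
    push_neg at hgt
    have := A_mono_a hk1' (show a'+1 ≤ a2 by omega) 0
    omega
  · intro b2 h2
    by_contra hgt
    push_neg at hgt
    have := A_mono_b hk1' a' (show b'+1 ≤ b2 by omega)
    omega

/-- Base change sends `k`-normal forms to `k+1`-normal forms: if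
`m = A_a(k,b) + l` is in `k`-normal form, `a' = a[k←k+1]` and `b' = b[k←k+1]`,
then `m[k←k+1] = A_{a'}(k+1,b') + l` is in `(k+1)`-normal form. -/
theorem base_change_normal_form (k m a b l a' b' : ℕ) (hk : 3 ≤ k)
    (h : IsNF k m a b l) (ha : BC k a a') (hb : BC k b b') :
    IsNF (k + 1) (A a' (k + 1) b' + l) a' b' l :=
  (main_ind k hk m).2 a b l a' b' h ha hb
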